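/- Let p_u be a multilinear polynomial on variables indexed by [n]\{u} with all monomials of degree at most r-1. Fix l ∈ [r-1]. Let J_l be the set of maximal monomials of p_u of size strictly greater than l, let W_l be the set of all subsets I ⊆ [n]\{u} with l < |I| ≤ r-1 that are contained in some element of J_l, and let F_l be the set of subsets I of size exactly l not contained in any element of W_l. Define p_{u,l} := Σ_{|I|≤l} p̂_u(I) Z_I + Σ_{I∈W_l} p̂_u(I) Z_I. Then for each I ∈ F_l, either I is a maximal monomial of p_{u,l} or p̂_{u,l}(I) = 0. -/

import Mathlib

/-! Every element of `J_l` is itself in `W_l`. So a proper superset `J` of `I ∈ F_l` kept in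
`p_{u,l}` is either too small (`|J| ≤ l = |I|`) or lies in some `A ∈ J_l ⊆ W_l`, forcing
`I ⊆ A`. Hence `I` is always a maximal monomial of `p_{u,l}`. -/

open Classical

/-- `I` is a maximal monomial of the multilinear polynomial with coefficient
function `p`: all strict supersets have zero coefficient. -/
def MaxMono {n : ℕ} (p : Finset (Fin n) → ℝ) (I : Finset (Fin n)) : Prop :=
  ∀ J : Finset (Fin n), I ⊂ J → p J = 0

theorem maxMono_ite_of_forall_ssuperset_not {n : ℕ} (P : Finset (Fin n) → Prop)
    [DecidablePred P] (p : Finset (Fin n) → ℝ) {I : Finset (Fin n)} (h : ∀ J, I ⊂ J → ¬ P J) :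
    MaxMono (fun J => if P J then p J else 0) I :=
  fun J hIJ => if_neg (h J hIJ)

theorem mrf_candidate_max_or_zero_general {n r : ℕ} (u : Fin n) (p : Finset (Fin n) → ℝ)
    (l : ℕ)
    (Jl Wl Fl : Set (Finset (Fin n)))
    (hJl : Jl = {I | u ∉ I ∧ l < I.card ∧ I.card ≤ r - 1 ∧ MaxMono p I})
    (hWl : Wl = {I | u ∉ I ∧ l < I.card ∧ I.card ≤ r - 1 ∧ ∃ A ∈ Jl, I ⊆ A})
    (hFl : Fl = {I | u ∉ I ∧ I.card = l ∧ ∀ A ∈ Wl, ¬ I ⊆ A})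
    (pul : Finset (Fin n) → ℝ)
    (hpul : pul = fun I => if I.card ≤ l ∨ I ∈ Wl then p I else 0) :
    ∀ I ∈ Fl, MaxMono pul I ∨ pul I = 0 := by
  have hJW : ∀ A ∈ Jl, A ∈ Wl := by
    intro A hA
    rw [hWl]
    obtain ⟨huA, hlA, hAr, -⟩ := hJl ▸ hA
    exact ⟨huA, hlA, hAr, A, hA, subset_rfl⟩
  subst hFl hpul
  rintro I ⟨-, hI, hIW⟩
  refine Or.inl (maxMono_ite_of_forall_ssuperset_not _ p fun J hIJ hJ => ?_)
  rcases hJ with hJcard | hJWl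
  · have := Finset.card_lt_card hIJ
    omega
  · obtain ⟨-, -, -, A, hA, hJA⟩ := hWl ▸ hJWl
    exact hIW A (hJW A hA) (hIJ.subset.trans hJA)

/-- with `J_l` the maximal monomials of `p_u` of size in `(l, r-1]`,
`W_l` the subsets of size in `(l, r-1]` contained in some element of `J_l`,
`F_l` the subsets of size exactly `l` not contained in any element of `W_l`,
and `p_{u,l}` the truncation of `p_u` to monomials of size `≤ l` or in `W_l`,
every `I ∈ F_l` is either a maximal monomial of `p_{u,l}` or has zero
coefficient in `p_{u,l}`. -/
theorem mrf_candidate_max_or_zero {n r : ℕ} (u : Fin n) (p : Finset (Fin n) → ℝ)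
    (hdeg : ∀ I, p I ≠ 0 → I.card ≤ r - 1)
    (hu : ∀ I, p I ≠ 0 → u ∉ I)
    (l : ℕ) (hl1 : 1 ≤ l) (hl2 : l ≤ r - 1)
    (Jl Wl Fl : Set (Finset (Fin n)))
    (hJl : Jl = {I | u ∉ I ∧ l < I.card ∧ I.card ≤ r - 1 ∧ MaxMono p I})
    (hWl : Wl = {I | u ∉ I ∧ l < I.card ∧ I.card ≤ r - 1 ∧ ∃ A ∈ Jl, I ⊆ A})
    (hFl : Fl = {I | u ∉ I ∧ I.card = l ∧ ∀ A ∈ Wl, ¬ I ⊆ A})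
    (pul : Finset (Fin n) → ℝ)
    (hpul : pul = fun I => if I.card ≤ l ∨ I ∈ Wl then p I else 0) :
    ∀ I ∈ Fl, MaxMono pul I ∨ pul I = 0 :=
  mrf_candidate_max_or_zero_general u p l Jl Wl Fl hJl hWl hFl pul hpul
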